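/- arXiv:1804.06608 — 3 statements merged into one kernel-verified Lean document; each statement's English description precedes it below -/
import Mathlib

section
/- Let β > 1, n ≥ 1, and p ≥ 0 an integer. For a β-admissible word (ε_1,…,ε_n), the cylinder I_{n+p}(ε_1,…,ε_n,0^p) is full if and only if |I_n(ε_1,…,ε_n)| ≥ β^{-(n+p)}. -/
open Filter MeasureTheory Set

/-- The β-transformation `T_β(x) = βx - ⌊βx⌋`. -/
noncomputable def betaT (β x : ℝ) : ℝ := Int.fract (β * x)

/-- The `(n+1)`-st digit of the β-expansion of `x` (0-indexed):
`betaDigit β x n = ⌊β ⬝ T_β^n(x)⌋`. -/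
noncomputable def betaDigit (β x : ℝ) (n : ℕ) : ℕ := (⌊β * (betaT β)^[n] x⌋).toNat

/-- The set `Σ_β^n` of β-admissible words of length `n`. -/
def admissibleWords (β : ℝ) (n : ℕ) : Set (Fin n → ℕ) :=
  {w | ∃ x ∈ Set.Ico (0:ℝ) 1, ∀ i : Fin n, betaDigit β x i = w i}

/-- The set `Σ_β` of β-admissible digit sequences. -/
def admissibleSeqs (β : ℝ) : Set (ℕ → ℕ) :=
  {e | ∃ x ∈ Set.Ico (0:ℝ) 1, ∀ i, betaDigit β x i = e i}

/-- The cylinder `I_n(w)` of a word `w`. -/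
def cylinder (β : ℝ) {n : ℕ} (w : Fin n → ℕ) : Set ℝ :=
  {x | x ∈ Set.Ico (0:ℝ) 1 ∧ ∀ i : Fin n, betaDigit β x i = w i}

/-- The partial digit sum `S_n(x,β)`. -/
noncomputable def Sdig (β x : ℝ) (n : ℕ) : ℝ := ∑ i ∈ Finset.range n, (betaDigit β x i : ℝ)

/-!
Every cylinder `I_n(w)` is an interval with least element `v = ∑ εᵢ β^{-i}`, and on it
`T^n x = β^n (x - v)`. Since `I_p(0^p) = [0, β^{-p})`, this gives
`I_{n+p}(w 0^p) = I_n(w) ∩ [v, v + β^{-(n+p)})`, which has length `β^{-(n+p)}` exactly when the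
interval `I_n(w)` extends at least that far beyond `v`, i.e. when `|I_n(w)| ≥ β^{-(n+p)}`.
-/

theorem Set.OrdConnected.volume_inter_Iio_eq_iff {C : Set ℝ} (hC : C.OrdConnected) {v r : ℝ}
    (hv : IsLeast C v) :
    volume (C ∩ Iio (v + r)) = ENNReal.ofReal r ↔ ENNReal.ofReal r ≤ volume C := by
  refine ⟨fun h => h ▸ measure_mono inter_subset_left, fun h => ?_⟩
  have hIco : Ico v (v + r) ⊆ C := by
    intro z hz
    by_contra hzC
    have hCz : C ⊆ Ico v z := fun y hy =>
      ⟨hv.2 hy, lt_of_not_ge fun hzy => hzC (hC.out hv.1 hy ⟨hz.1, hzy⟩)⟩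
    have hlt : ENNReal.ofReal (z - v) < ENNReal.ofReal r :=
      (ENNReal.ofReal_lt_ofReal_iff (by linarith [hz.1, hz.2])).2 (by linarith [hz.2])
    exact (h.trans (measure_mono hCz)).not_gt (by rwa [Real.volume_Ico])
  have hCap : C ∩ Iio (v + r) = Ico v (v + r) :=
    Subset.antisymm (fun y hy => ⟨hv.2 hy.1, hy.2⟩) fun y hy => ⟨hIco hy, hy.2⟩
  rw [hCap, Real.volume_Ico, add_sub_cancel_left]

noncomputable def wordValue (β : ℝ) {n : ℕ} (w : Fin n → ℕ) : ℝ :=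
  ∑ i : Fin n, (w i : ℝ) / β ^ ((i : ℕ) + 1)

section BetaExpansion

variable {β : ℝ}

theorem betaT_mem_Ico (β x : ℝ) : betaT β x ∈ Ico 0 1 :=
  ⟨Int.fract_nonneg _, Int.fract_lt_one _⟩

theorem iterate_betaT_mem_Ico {x : ℝ} (hx : x ∈ Ico 0 1) : ∀ k, (betaT β)^[k] x ∈ Ico 0 1
  | 0 => hx
  | k + 1 => by rw [Function.iterate_succ_apply']; exact betaT_mem_Ico β _

theorem betaT_eq_sub_floor (β x : ℝ) : betaT β x = β * x - ⌊β * x⌋ := rfl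

theorem mem_cylinder_cons (hβ : 0 ≤ β) {n : ℕ} {a : ℕ} {w : Fin n → ℕ} {x : ℝ} :
    x ∈ cylinder β (Fin.cons a w : Fin (n + 1) → ℕ) ↔
      x ∈ Ico 0 1 ∧ ⌊β * x⌋ = a ∧ β * x - a ∈ cylinder β w := by
  simp only [_root_.cylinder, mem_ofPred_eq, Fin.forall_fin_succ, Fin.cons_zero, Fin.cons_succ,
    Fin.val_zero]
  refine and_congr_right fun hx => ?_
  have hfloor : 0 ≤ ⌊β * x⌋ := Int.floor_nonneg.2 (mul_nonneg hβ hx.1)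
  have hdig0 : betaDigit β x 0 = a ↔ ⌊β * x⌋ = a := by
    simp only [betaDigit, Function.iterate_zero, id]
    omega
  rw [hdig0]
  refine and_congr_right fun ha => ?_
  have hT : β * x - a = betaT β x := by rw [betaT_eq_sub_floor, ha, Int.cast_natCast]
  rw [hT]
  simp only [betaDigit, Fin.val_succ, Function.iterate_succ_apply]
  exact ⟨fun h => ⟨betaT_mem_Ico β x, h⟩, fun h => h.2⟩

theorem wordValue_cons {n : ℕ} (a : ℕ) (w : Fin n → ℕ) :
    wordValue β (Fin.cons a w : Fin (n + 1) → ℕ) = (a + wordValue β w) / β := by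
  simp only [wordValue, Fin.sum_univ_succ, Fin.cons_zero, Fin.cons_succ, Fin.val_zero,
    Fin.val_succ, add_div, Finset.sum_div, div_div, pow_succ]
  simp

theorem iterate_betaT_of_mem_cylinder (hβ : 0 < β) {n : ℕ} {w : Fin n → ℕ} {x : ℝ}
    (hx : x ∈ cylinder β w) : (betaT β)^[n] x = β ^ n * (x - wordValue β w) := by
  induction w using Fin.consInduction generalizing x with
  | elim0 => simp [wordValue]
  | cons a w ih =>
    obtain ⟨hx, ha, hTx⟩ := (mem_cylinder_cons hβ.le).1 hx
    rw [Function.iterate_succ_apply, betaT_eq_sub_floor, ha, Int.cast_natCast, ih hTx,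
      wordValue_cons]
    field_simp
    ring

theorem wordValue_le_of_mem_cylinder (hβ : 0 < β) {n : ℕ} {w : Fin n → ℕ} {x : ℝ}
    (hx : x ∈ cylinder β w) : wordValue β w ≤ x := by
  have h := (iterate_betaT_mem_Ico (β := β) hx.1 n).1
  rw [iterate_betaT_of_mem_cylinder hβ hx] at h
  exact sub_nonneg.1 (nonneg_of_mul_nonneg_right h (pow_pos hβ n))

theorem wordValue_mem_cylinder (hβ : 0 < β) {n : ℕ} {w : Fin n → ℕ} {x : ℝ}
    (hx : x ∈ cylinder β w) : wordValue β w ∈ cylinder β w := by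
  induction w using Fin.consInduction generalizing x with
  | elim0 => exact ⟨by simp [wordValue], fun i => i.elim0⟩
  | @cons m a w ih =>
    obtain ⟨hx, ha, hTx⟩ := (mem_cylinder_cons hβ.le).1 hx
    have hv := ih hTx
    have hvx := wordValue_le_of_mem_cylinder hβ hTx
    have hβv : β * wordValue β (Fin.cons a w : Fin (m + 1) → ℕ) = a + wordValue β w := by
      rw [wordValue_cons]; field_simp
    refine (mem_cylinder_cons hβ.le).2 ⟨⟨?_, ?_⟩, ?_, ?_⟩
    · rw [wordValue_cons]; exact div_nonneg (by linarith [hv.1.1]) hβ.le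
    -- `a + v(w) ≤ a + T x = β x < β`
    · rw [wordValue_cons, div_lt_one hβ]; linarith [hvx, mul_lt_mul_of_pos_left hx.2 hβ]
    · rw [hβv, Int.floor_natCast_add, Int.floor_eq_zero_iff.2 hv.1, add_zero]
    · rwa [hβv, add_sub_cancel_left]

theorem cylinder_ordConnected (hβ : 0 ≤ β) {n : ℕ} (w : Fin n → ℕ) :
    (cylinder β w).OrdConnected := by
  induction w using Fin.consInduction with
  | elim0 =>
    exact ⟨fun x hx y hy z hz =>
      ⟨⟨hx.1.1.trans hz.1, hz.2.trans_lt hy.1.2⟩, (·.elim0)⟩⟩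
  | cons a w ih =>
    refine ⟨fun x hx y hy z hz => ?_⟩
    obtain ⟨hx, hxa, hTx⟩ := (mem_cylinder_cons hβ).1 hx
    obtain ⟨hy, hya, hTy⟩ := (mem_cylinder_cons hβ).1 hy
    have hβxz := mul_le_mul_of_nonneg_left hz.1 hβ
    have hβzy := mul_le_mul_of_nonneg_left hz.2 hβ
    have hza : ⌊β * z⌋ = a :=
      le_antisymm (hya ▸ Int.floor_mono hβzy) (hxa ▸ Int.floor_mono hβxz)
    refine (mem_cylinder_cons hβ).2
      ⟨⟨hx.1.trans hz.1, hz.2.trans_lt hy.2⟩, hza, ih.out hTx hTy ⟨?_, ?_⟩⟩ <;> linarith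

theorem cylinder_const_zero (hβ : 1 ≤ β) (p : ℕ) :
    cylinder β (fun _ : Fin p => 0) = Ico 0 (β ^ p)⁻¹ := by
  induction p with
  | zero => ext x; simp [_root_.cylinder]
  | succ p ih =>
    ext x
    have hβ0 : 0 < β := zero_lt_one.trans_le hβ
    have hcons : (fun _ : Fin (p + 1) => 0) = Fin.cons 0 fun _ : Fin p => 0 :=
      (Fin.cons_self_tail _).symm
    have hscale : x < (β ^ (p + 1))⁻¹ ↔ β * x < (β ^ p)⁻¹ := by
      rw [inv_eq_one_div, inv_eq_one_div, lt_div_iff₀ (by positivity),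
        lt_div_iff₀ (by positivity)]
      ring_nf
    have hinv : (β ^ p)⁻¹ ≤ 1 := inv_le_one_of_one_le₀ (one_le_pow₀ hβ)
    rw [hcons, mem_cylinder_cons hβ0.le, ih]
    simp only [Nat.cast_zero, sub_zero, Int.floor_eq_zero_iff, mem_Ico, hscale]
    constructor
    · rintro ⟨⟨hx0, -⟩, -, -, h⟩
      exact ⟨hx0, h⟩
    · rintro ⟨hx0, h⟩
      have hxβx : x ≤ β * x := le_mul_of_one_le_left hx0 hβ
      exact ⟨⟨hx0, by linarith⟩, ⟨by positivity, by linarith⟩, by positivity, h⟩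

theorem betaDigit_add (β x : ℝ) (m j : ℕ) :
    betaDigit β x (m + j) = betaDigit β ((betaT β)^[m] x) j := by
  rw [betaDigit, betaDigit, add_comm, Function.iterate_add_apply]

theorem mem_cylinder_append {m n : ℕ} {w : Fin m → ℕ} {u : Fin n → ℕ} {x : ℝ} :
    x ∈ cylinder β (Fin.append w u) ↔
      x ∈ cylinder β w ∧ (betaT β)^[m] x ∈ cylinder β u := by
  simp only [_root_.cylinder, mem_ofPred_eq, Fin.forall_fin_add, Fin.append_left,
    Fin.append_right, Fin.val_castAdd, Fin.val_natAdd, betaDigit_add]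
  exact ⟨fun ⟨hx, hw, hu⟩ => ⟨⟨hx, hw⟩, iterate_betaT_mem_Ico hx m, hu⟩,
    fun ⟨⟨hx, hw⟩, _, hu⟩ => ⟨hx, hw, hu⟩⟩

theorem cylinder_append_zeros (hβ : 1 ≤ β) {n : ℕ} (w : Fin n → ℕ) (p : ℕ) :
    cylinder β (Fin.append w fun _ : Fin p => 0) =
      cylinder β w ∩ Iio (wordValue β w + (β ^ (n + p))⁻¹) := by
  have hβ0 : 0 < β := zero_lt_one.trans_le hβ
  ext x
  rw [mem_cylinder_append, cylinder_const_zero hβ, mem_inter_iff]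
  refine and_congr_right fun hx => ?_
  have hvx := wordValue_le_of_mem_cylinder hβ0 hx
  rw [iterate_betaT_of_mem_cylinder hβ0 hx, mem_Ico, mem_Iio,
    and_iff_right (mul_nonneg (pow_nonneg hβ0.le n) (sub_nonneg.2 hvx)),
    ← lt_inv_mul_iff₀ (pow_pos hβ0 n), ← mul_inv, ← pow_add, sub_lt_iff_lt_add']

theorem stmt8_general (β : ℝ) (hβ : 1 < β) {n : ℕ} (p : ℕ) (w : Fin n → ℕ)
    (hw : w ∈ admissibleWords β n) :
    volume (cylinder β (Fin.append w (fun _ : Fin p => 0))) =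
        ENNReal.ofReal ((β ^ (n + p))⁻¹) ↔
      ENNReal.ofReal ((β ^ (n + p))⁻¹) ≤ volume (cylinder β w) := by
  obtain ⟨x, hx⟩ := hw
  have hβ0 : 0 < β := zero_lt_one.trans hβ
  have hleast : IsLeast (cylinder β w) (wordValue β w) :=
    ⟨wordValue_mem_cylinder hβ0 hx, fun _ => wordValue_le_of_mem_cylinder hβ0⟩
  rw [cylinder_append_zeros hβ.le]
  exact (cylinder_ordConnected hβ0.le w).volume_inter_Iio_eq_iff hleast

/-- `I_{n+p}(ε_1,…,ε_n,0^p)` is full iff `|I_n(ε_1,…,ε_n)| ≥ β^{-(n+p)}`. -/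
theorem stmt8 (β : ℝ) (hβ : 1 < β) {n : ℕ} (hn : 1 ≤ n) (p : ℕ) (w : Fin n → ℕ)
    (hw : w ∈ admissibleWords β n) :
    volume (cylinder β (Fin.append w (fun _ : Fin p => 0))) =
        ENNReal.ofReal ((β ^ (n + p))⁻¹) ↔
      ENNReal.ofReal ((β ^ (n + p))⁻¹) ≤ volume (cylinder β w) :=
  stmt8_general β hβ p w hw
end BetaExpansion
end

section
/- Let β ∈ B_0 (i.e., the runs of consecutive zeros in the infinite β-expansion of 1 have bounded length). Then there exists an integer M > 0 such that for every β-admissible word (ε_1,…,ε_n), the cylinder I_{n+M}(ε_1,…,ε_n,0^M) is full; in particular β^{-(n+M)} ≤ |I_n(ε_1,…,ε_n)| ≤ β^{-n} for all β-admissible words of all lengths n. -/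
open Filter MeasureTheory Set

/-- The digits of the β-expansion of 1: `oneDigit β n = ⌊β ⬝ T_β^n(1)⌋`
(0-indexed, so `oneDigit β 0 = ε_1(1,β)`). -/
noncomputable def oneDigit (β : ℝ) (n : ℕ) : ℕ := (⌊β * (betaT β)^[n] 1⌋).toNat

open Classical in
/-- The infinite β-expansion `(ε_1^*(1,β), ε_2^*(1,β), …)` of 1: if the expansion of 1
terminates with last nonzero digit at index `n`, it is the periodic sequence
`(ε_1(1,β),…,ε_n(1,β)-1)^∞`; otherwise it is the expansion of 1 itself. -/
noncomputable def oneStar (β : ℝ) : ℕ → ℕ :=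
  if h : ∃ n, oneDigit β n ≠ 0 ∧ ∀ m, n < m → oneDigit β m = 0 then
    fun k => if k % (h.choose + 1) = h.choose then oneDigit β h.choose - 1
      else oneDigit β (k % (h.choose + 1))
  else oneDigit β

section Aux
variable {β : ℝ}

lemma iter_mem (hβ : 0 < β) {x : ℝ} (h0 : 0 ≤ x) (h1 : x ≤ 1) (k : ℕ) :
    0 ≤ (betaT β)^[k] x ∧ (betaT β)^[k] x ≤ 1 := by
  induction k with
  | zero => exact ⟨h0, h1⟩
  | succ n ih =>
    rw [Function.iterate_succ_apply']
    exact ⟨Int.fract_nonneg _, (Int.fract_lt_one _).le⟩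

lemma digit_cast (hβ : 0 < β) {x : ℝ} (h0 : 0 ≤ x) (h1 : x ≤ 1) (k : ℕ) :
    (betaDigit β x k : ℝ) = ⌊β * (betaT β)^[k] x⌋ := by
  have h := (iter_mem hβ h0 h1 k).1
  have hnn : (0:ℤ) ≤ ⌊β * (betaT β)^[k] x⌋ :=
    Int.floor_nonneg.mpr (mul_nonneg hβ.le h)
  rw [betaDigit]
  exact_mod_cast congrArg (Int.cast : ℤ → ℝ) (Int.toNat_of_nonneg hnn)

lemma digit_le (hβ : 0 < β) {x : ℝ} (h0 : 0 ≤ x) (h1 : x ≤ 1) (k : ℕ) :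
    (betaDigit β x k : ℝ) ≤ β * (betaT β)^[k] x ∧
      β * (betaT β)^[k] x < (betaDigit β x k : ℝ) + 1 := by
  rw [digit_cast hβ h0 h1 k]
  exact ⟨Int.floor_le _, Int.lt_floor_add_one _⟩

lemma iterT_succ (hβ : 0 < β) {x : ℝ} (h0 : 0 ≤ x) (h1 : x ≤ 1) (k : ℕ) :
    (betaT β)^[k+1] x = β * (betaT β)^[k] x - (betaDigit β x k : ℝ) := by
  rw [Function.iterate_succ_apply', betaT, Int.fract, digit_cast hβ h0 h1 k]

/-- partial value of the expansion of `x`. -/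
noncomputable def pv (β x : ℝ) (n : ℕ) : ℝ :=
  ∑ i ∈ Finset.range n, (betaDigit β x i : ℝ) * (β ^ (i+1))⁻¹

lemma pv_expand (hβ : 1 < β) {x : ℝ} (h0 : 0 ≤ x) (h1 : x ≤ 1) (n : ℕ) :
    x = pv β x n + (β ^ n)⁻¹ * (betaT β)^[n] x := by
  have hb : (0:ℝ) < β := lt_trans one_pos hβ
  induction n with
  | zero => simp [pv]
  | succ n ih =>
    rw [pv, Finset.sum_range_succ, ← pv]
    rw [iterT_succ hb h0 h1 n]
    have hbn : (β:ℝ) ^ n ≠ 0 := by positivity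
    have hbn1 : (β:ℝ) ^ (n+1) ≠ 0 := by positivity
    field_simp at ih ⊢
    ring_nf
    ring_nf at ih
    nlinarith [ih]

lemma pv_nonneg (hβ : 1 < β) (x : ℝ) (n : ℕ) : 0 ≤ pv β x n := by
  have hb : (0:ℝ) < β := lt_trans one_pos hβ
  apply Finset.sum_nonneg
  intro i _
  positivity

lemma pv_mono (hβ : 1 < β) (x : ℝ) {m n : ℕ} (h : m ≤ n) : pv β x m ≤ pv β x n := by
  have hb : (0:ℝ) < β := lt_trans one_pos hβ
  apply Finset.sum_le_sum_of_subset_of_nonneg (Finset.range_subset_range.mpr h)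
  intro i _ _
  positivity

lemma pv_le (hβ : 1 < β) {x : ℝ} (h0 : 0 ≤ x) (h1 : x ≤ 1) (n : ℕ) : pv β x n ≤ x := by
  have hb : (0:ℝ) < β := lt_trans one_pos hβ
  have := pv_expand hβ h0 h1 n
  have h2 := (iter_mem hb h0 h1 n).1
  nlinarith [inv_nonneg.mpr (le_of_lt (pow_pos hb n))]

lemma le_pv_add (hβ : 1 < β) {x : ℝ} (h0 : 0 ≤ x) (h1 : x ≤ 1) (n : ℕ) :
    x ≤ pv β x n + (β ^ n)⁻¹ := by
  have hb : (0:ℝ) < β := lt_trans one_pos hβ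
  have := pv_expand hβ h0 h1 n
  have h2 := (iter_mem hb h0 h1 n).2
  nlinarith [inv_nonneg.mpr (le_of_lt (pow_pos hb n))]

lemma digit_shift (k j : ℕ) (x : ℝ) :
    betaDigit β x (k + j) = betaDigit β ((betaT β)^[k] x) j := by
  rw [betaDigit, betaDigit, Nat.add_comm, Function.iterate_add_apply]

lemma pv_shift (hβ : 1 < β) (x : ℝ) (k m : ℕ) :
    pv β x (k + m) = pv β x k + (β ^ k)⁻¹ * pv β ((betaT β)^[k] x) m := by
  have hb : (0:ℝ) < β := lt_trans one_pos hβ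
  rw [pv, Finset.sum_range_add, ← pv]
  congr 1
  rw [pv, Finset.mul_sum]
  apply Finset.sum_congr rfl
  intro i _
  rw [digit_shift k i x, pow_add, mul_inv]
  ring


lemma oneDigit_eq (k : ℕ) : oneDigit β k = betaDigit β 1 k := rfl

lemma iterT_one_zero (hβ : 1 < β) {n₀ : ℕ} (hz : ∀ m, n₀ < m → oneDigit β m = 0) :
    (betaT β)^[n₀ + 1] 1 = 0 := by
  have hb : (0:ℝ) < β := lt_trans one_pos hβ
  set t := (betaT β)^[n₀ + 1] 1 with ht
  have h01 : (0:ℝ) ≤ 1 := zero_le_one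
  have h11 : (1:ℝ) ≤ 1 := le_refl 1
  have ht0 : 0 ≤ t := (iter_mem hb h01 h11 _).1
  have key : ∀ j, (betaT β)^[n₀ + 1 + j] 1 = β ^ j * t ∧ β ^ (j+1) * t < 1 := by
    intro j
    induction j with
    | zero =>
      constructor
      · simp [ht]
      · have hd : oneDigit β (n₀ + 1) = 0 := hz _ (Nat.lt_succ_self _)
        rw [oneDigit_eq] at hd
        have hcast := digit_cast hb h01 h11 (n₀ + 1)
        rw [hd] at hcast
        have hfl : β * t < 1 := by
          have := Int.lt_floor_add_one (β * (betaT β)^[n₀+1] 1)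
          rw [← hcast] at this
          simpa [ht] using this
        simpa using hfl
    | succ j ih =>
      obtain ⟨ihe, ihl⟩ := ih
      have hfr : (betaT β)^[n₀ + 1 + (j+1)] 1 = β ^ (j+1) * t := by
        have : n₀ + 1 + (j + 1) = (n₀ + 1 + j) + 1 := by ring
        rw [this, Function.iterate_succ_apply', ihe, betaT]
        rw [Int.fract_eq_self.mpr ⟨by positivity, by rw [← mul_assoc, ← pow_succ']; exact ihl⟩]
        ring
      refine ⟨hfr, ?_⟩
      have hd : oneDigit β (n₀ + 1 + (j+1)) = 0 := hz _ (by omega)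
      rw [oneDigit_eq] at hd
      have hcast := digit_cast hb h01 h11 (n₀ + 1 + (j+1))
      rw [hd, hfr] at hcast
      have hfl : β * (β ^ (j+1) * t) < 1 := by
        have := Int.lt_floor_add_one (β * (β ^ (j+1) * t))
        rw [← hcast] at this
        simpa using this
      calc β ^ (j+1+1) * t = β * (β ^ (j+1) * t) := by ring
      _ < 1 := hfl
  by_contra hne
  have htpos : 0 < t := lt_of_le_of_ne ht0 (Ne.symm hne)
  obtain ⟨j, hj⟩ := pow_unbounded_of_one_lt (1 / t) hβ
  have h1 : 1 < β ^ j * t := by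
    rw [div_lt_iff₀ htpos] at hj
    linarith
  have h2 : β ^ j * t ≤ β ^ (j+1) * t := by
    have : β ^ j ≤ β ^ (j+1) := pow_le_pow_right₀ (le_of_lt hβ) (Nat.le_succ j)
    nlinarith
  have := (key j).2
  linarith

/-- partial value of the infinite expansion of 1. -/
noncomputable def pvStar (β : ℝ) (n : ℕ) : ℝ :=
  ∑ i ∈ Finset.range n, (oneStar β i : ℝ) * (β ^ (i+1))⁻¹

lemma pvStar_formula (hβ : 1 < β) (k : ℕ) :
    ∃ y, 0 ≤ y ∧ y ≤ 1 ∧ 1 - pvStar β k = (β ^ k)⁻¹ * y := by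
  classical
  have hb : (0:ℝ) < β := lt_trans one_pos hβ
  have h01 : (0:ℝ) ≤ 1 := zero_le_one
  have h11 : (1:ℝ) ≤ 1 := le_refl 1
  by_cases hfin : ∃ n, oneDigit β n ≠ 0 ∧ ∀ m, n < m → oneDigit β m = 0
  · -- finite case
    set n₀ := hfin.choose with hn₀
    obtain ⟨hne, hz⟩ := hfin.choose_spec
    set p := n₀ + 1 with hp
    have hstar : ∀ k, oneStar β k =
        if k % p = n₀ then oneDigit β n₀ - 1 else oneDigit β (k % p) := by
      intro k
      rw [oneStar, dif_pos hfin]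
    have hTp : (betaT β)^[p] 1 = 0 := iterT_one_zero hβ hz
    have hpv1p : pv β 1 p = 1 := by
      have := pv_expand hβ h01 h11 p
      rw [hTp] at this
      linarith [this]
    have hstar_small : ∀ i, i < n₀ → (oneStar β i : ℝ) = betaDigit β 1 i := by
      intro i hi
      rw [hstar i, Nat.mod_eq_of_lt (by omega), if_neg (by omega), ← oneDigit_eq]
    have hstar_n₀ : (oneStar β n₀ : ℝ) = (betaDigit β 1 n₀ : ℝ) - 1 := by
      rw [hstar n₀, Nat.mod_eq_of_lt (by omega), if_pos rfl, ← oneDigit_eq]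
      have h1le : 1 ≤ oneDigit β n₀ := Nat.one_le_iff_ne_zero.mpr hne
      push_cast [Nat.cast_sub h1le]
      ring
    have hsmall : ∀ m, m ≤ n₀ → pvStar β m = pv β 1 m := by
      intro m hm
      apply Finset.sum_congr rfl
      intro i hi
      rw [Finset.mem_range] at hi
      rw [hstar_small i (by omega)]
    have hpvStar_p : pvStar β p = 1 - (β ^ p)⁻¹ := by
      rw [pvStar, Finset.sum_range_succ, ← pvStar, hsmall n₀ le_rfl, hstar_n₀]
      have : pv β 1 p = pv β 1 n₀ + (betaDigit β 1 n₀ : ℝ) * (β ^ (n₀+1))⁻¹ := by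
        rw [pv, Finset.sum_range_succ, ← pv]
      rw [hpv1p] at this
      rw [hp]
      nlinarith [this]
    have hperiod : ∀ m, pvStar β (p + m) = pvStar β p + (β ^ p)⁻¹ * pvStar β m := by
      intro m
      rw [pvStar, Finset.sum_range_add, ← pvStar]
      congr 1
      rw [pvStar, Finset.mul_sum]
      apply Finset.sum_congr rfl
      intro i _
      have hos : oneStar β (p + i) = oneStar β i := by
        rw [hstar (p + i), hstar i, Nat.add_mod_left]
      rw [hos, pow_add, mul_inv]
      ring
    have main : ∀ k, 1 - pvStar β k = (β ^ k)⁻¹ * (betaT β)^[k % p] 1 := by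
      intro k
      induction k using Nat.strong_induction_on with
      | _ k ih =>
        by_cases hk : k < p
        · rw [Nat.mod_eq_of_lt hk]
          have : pvStar β k = pv β 1 k := hsmall k (by omega)
          rw [this]
          linarith [pv_expand hβ h01 h11 k]
        · push_neg at hk
          have hkk : k = p + (k - p) := by omega
          rw [hkk, hperiod, hpvStar_p]
          have ihm := ih (k - p) (by omega)
          have hmod : (p + (k - p)) % p = (k - p) % p := Nat.add_mod_left p (k - p)
          rw [hmod]
          have hppos : (0:ℝ) < β ^ p := pow_pos hb p
          have hpkpos : (0:ℝ) < β ^ (k - p) := pow_pos hb (k-p)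
          have hsplit : (β:ℝ) ^ (p + (k - p)) = β ^ p * β ^ (k - p) := pow_add β p (k - p)
          rw [hsplit, mul_inv]
          linear_combination (β ^ p)⁻¹ * ihm
    refine ⟨(betaT β)^[k % p] 1, (iter_mem hb h01 h11 _).1, (iter_mem hb h01 h11 _).2, main k⟩
  · -- infinite case
    have hstar : oneStar β = oneDigit β := by
      rw [oneStar, dif_neg hfin]
    have : pvStar β k = pv β 1 k := by
      apply Finset.sum_congr rfl
      intro i _
      rw [hstar, oneDigit_eq]
    rw [this]
    exact ⟨(betaT β)^[k] 1, (iter_mem hb h01 h11 _).1, (iter_mem hb h01 h11 _).2,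
      by linarith [pv_expand hβ h01 h11 k]⟩

lemma pvStar_le_one (hβ : 1 < β) (k : ℕ) : pvStar β k ≤ 1 := by
  have hb : (0:ℝ) < β := lt_trans one_pos hβ
  obtain ⟨y, hy0, _, hid⟩ := pvStar_formula hβ k
  nlinarith [inv_nonneg.mpr (le_of_lt (pow_pos hb k))]

lemma one_sub_pvStar_le (hβ : 1 < β) (k : ℕ) : 1 - pvStar β k ≤ (β ^ k)⁻¹ := by
  have hb : (0:ℝ) < β := lt_trans one_pos hβ
  obtain ⟨y, hy0, hy1, hid⟩ := pvStar_formula hβ k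
  rw [hid]
  nlinarith [inv_nonneg.mpr (le_of_lt (pow_pos hb k))]


lemma pvStar_succ (hβ : 1 < β) (k : ℕ) :
    pvStar β (k+1) = pvStar β k + (oneStar β k : ℝ) * (β ^ (k+1))⁻¹ := by
  rw [pvStar, Finset.sum_range_succ, ← pvStar]

lemma pvStar_mono (hβ : 1 < β) {m n : ℕ} (h : m ≤ n) : pvStar β m ≤ pvStar β n := by
  have hb : (0:ℝ) < β := lt_trans one_pos hβ
  apply Finset.sum_le_sum_of_subset_of_nonneg (Finset.range_subset_range.mpr h)
  intro i _ _
  positivity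

lemma star_tail_ge (hβ : 1 < β) {C : ℕ}
    (hB0 : ∀ n : ℕ, ∃ j : ℕ, 1 ≤ j ∧ j ≤ C ∧ oneStar β (n + j) ≠ 0) (m : ℕ) :
    (β ^ (m + C + 1))⁻¹ ≤ 1 - pvStar β m := by
  have hb : (0:ℝ) < β := lt_trans one_pos hβ
  obtain ⟨j, hj1, hjC, hne⟩ := hB0 m
  have h1 : 0 ≤ 1 - pvStar β (m + j + 1) := by linarith [pvStar_le_one hβ (m + j + 1)]
  have h2 := pvStar_succ hβ (m + j)
  have h3 : pvStar β m ≤ pvStar β (m + j) := pvStar_mono hβ (Nat.le_add_right m j)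
  have h4 : (1:ℝ) ≤ (oneStar β (m + j) : ℝ) := by
    exact_mod_cast Nat.one_le_iff_ne_zero.mpr hne
  have h5 : (β ^ (m + C + 1))⁻¹ ≤ (β ^ (m + j + 1))⁻¹ := by
    apply inv_anti₀ (pow_pos hb _)
    exact pow_le_pow_right₀ hβ.le (by omega)
  have h6 : (0:ℝ) < (β ^ (m + j + 1))⁻¹ := by positivity
  nlinarith

lemma lex_le (hβ : 1 < β) {x : ℝ} (h0 : 0 ≤ x) (h1 : x < 1) (m : ℕ)
    (hag : ∀ i, i < m → betaDigit β x i = oneStar β i) :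
    betaDigit β x m ≤ oneStar β m := by
  have hb : (0:ℝ) < β := lt_trans one_pos hβ
  by_contra hlt
  push_neg at hlt
  have hcast : (oneStar β m : ℝ) + 1 ≤ (betaDigit β x m : ℝ) := by exact_mod_cast hlt
  have hple : pv β x (m+1) ≤ x := pv_le hβ h0 h1.le (m+1)
  have hagg : pv β x m = pvStar β m := by
    apply Finset.sum_congr rfl
    intro i hi
    rw [Finset.mem_range] at hi
    rw [hag i hi]
  have hsucc : pv β x (m+1) = pv β x m + (betaDigit β x m : ℝ) * (β ^ (m+1))⁻¹ := by
    rw [pv, Finset.sum_range_succ, ← pv]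
  have hN1 := one_sub_pvStar_le hβ (m+1)
  have hS := pvStar_succ hβ m
  have h6 : (0:ℝ) < (β ^ (m + 1))⁻¹ := by positivity
  nlinarith

lemma key_bound (hβ : 1 < β) {C : ℕ}
    (hB0 : ∀ n : ℕ, ∃ j : ℕ, 1 ≤ j ∧ j ≤ C ∧ oneStar β (n + j) ≠ 0) :
    ∀ m : ℕ, ∀ x : ℝ, 0 ≤ x → x < 1 → pv β x m ≤ 1 - (β ^ (m + C + 1))⁻¹ := by
  have hb : (0:ℝ) < β := lt_trans one_pos hβ
  intro m
  induction m using Nat.strong_induction_on with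
  | _ m ih =>
    intro x h0 h1
    by_cases hag : ∀ i, i < m → betaDigit β x i = oneStar β i
    · have hagg : pv β x m = pvStar β m := by
        apply Finset.sum_congr rfl
        intro i hi
        rw [Finset.mem_range] at hi
        rw [hag i hi]
      rw [hagg]
      linarith [star_tail_ge hβ hB0 m]
    · push_neg at hag
      obtain ⟨i₀, hi₀m, hi₀⟩ := hag
      have hex : ∃ i, betaDigit β x i ≠ oneStar β i := ⟨i₀, hi₀⟩
      set k := Nat.find hex with hk
      have hkne : betaDigit β x k ≠ oneStar β k := Nat.find_spec hex
      have hkm : k < m := lt_of_le_of_lt (Nat.find_le hi₀) hi₀m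
      have hagk : ∀ i, i < k → betaDigit β x i = oneStar β i := by
        intro i hi
        have h := Nat.find_min hex (show i < Nat.find hex by omega)
        exact not_not.mp h
      have hklt : betaDigit β x k < oneStar β k :=
        lt_of_le_of_ne (lex_le hβ h0 h1 k hagk) hkne
      have hkcast : (betaDigit β x k : ℝ) ≤ (oneStar β k : ℝ) - 1 := by
        have : betaDigit β x k + 1 ≤ oneStar β k := hklt
        have := (Nat.cast_le (α := ℝ)).mpr this
        push_cast at this
        linarith
      -- decompose
      set y := (betaT β)^[k+1] x with hy
      have hy0 : 0 ≤ y := by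
        rw [hy, Function.iterate_succ_apply']
        exact Int.fract_nonneg _
      have hy1 : y < 1 := by
        rw [hy, Function.iterate_succ_apply']
        exact Int.fract_lt_one _
      set m' := m - (k + 1) with hm'
      have hmeq : m = (k + 1) + m' := by omega
      have hshift : pv β x m = pv β x (k+1) + (β ^ (k+1))⁻¹ * pv β y m' := by
        rw [hmeq]
        exact pv_shift hβ x (k+1) m'
      have hsucc : pv β x (k+1) = pv β x k + (betaDigit β x k : ℝ) * (β ^ (k+1))⁻¹ := by
        rw [pv, Finset.sum_range_succ, ← pv]
      have hagg : pv β x k = pvStar β k := by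
        apply Finset.sum_congr rfl
        intro i hi
        rw [Finset.mem_range] at hi
        rw [hagk i hi]
      have hIH : pv β y m' ≤ 1 - (β ^ (m' + C + 1))⁻¹ := ih m' (by omega) y hy0 hy1
      have hmul : (β ^ (k+1))⁻¹ * pv β y m' ≤ (β ^ (k+1))⁻¹ * (1 - (β ^ (m' + C + 1))⁻¹) :=
        mul_le_mul_of_nonneg_left hIH (by positivity)
      have hpowsplit : ((β : ℝ) ^ (m + C + 1))⁻¹ = (β ^ (k+1))⁻¹ * (β ^ (m' + C + 1))⁻¹ := by
        rw [← mul_inv, ← pow_add]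
        congr 2
        omega
      have hS := pvStar_succ hβ k
      have hP1 := pvStar_le_one hβ (k+1)
      have hkpos : (0:ℝ) < (β ^ (k+1))⁻¹ := by positivity
      have hdk : (betaDigit β x k : ℝ) * (β ^ (k+1))⁻¹ ≤
          ((oneStar β k : ℝ) - 1) * (β ^ (k+1))⁻¹ :=
        mul_le_mul_of_nonneg_right hkcast hkpos.le
      rw [hshift, hpowsplit]
      nlinarith


lemma lt_pv_add (hβ : 1 < β) {x : ℝ} (h0 : 0 ≤ x) (h1 : x < 1) (n : ℕ) :
    x < pv β x n + (β ^ n)⁻¹ := by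
  have hb : (0:ℝ) < β := lt_trans one_pos hβ
  cases n with
  | zero => simpa [pv] using h1
  | succ k =>
    have h := pv_expand hβ h0 h1.le (k+1)
    have hT : (betaT β)^[k+1] x < 1 := by
      rw [Function.iterate_succ_apply']
      exact Int.fract_lt_one _
    have hpos : (0:ℝ) < (β ^ (k+1))⁻¹ := by positivity
    nlinarith

lemma iterT_eq (hβ : 1 < β) {x : ℝ} (h0 : 0 ≤ x) (h1 : x ≤ 1) (i : ℕ) :
    (betaT β)^[i] x = β ^ i * (x - pv β x i) := by
  have hb : (0:ℝ) < β := lt_trans one_pos hβ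
  have h := pv_expand hβ h0 h1 i
  have hne : (β:ℝ) ^ i ≠ 0 := by positivity
  field_simp at h
  linear_combination -h

lemma small_iter (hβ : 1 < β) {y : ℝ} (hy0 : 0 ≤ y) {M : ℕ} (hyM : y < (β ^ M)⁻¹) :
    ∀ j, j ≤ M → (betaT β)^[j] y = β ^ j * y := by
  have hb : (0:ℝ) < β := lt_trans one_pos hβ
  intro j
  induction j with
  | zero => intro _; simp
  | succ j ih =>
    intro hj
    have hlt : β ^ (j+1) * y < 1 := by
      have h1 : β ^ (j+1) * y < β ^ (j+1) * (β ^ M)⁻¹ := by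
        apply mul_lt_mul_of_pos_left hyM (pow_pos hb _)
      have h2 : β ^ (j+1) * (β ^ M)⁻¹ ≤ 1 := by
        rw [mul_inv_le_iff₀ (pow_pos hb M), one_mul]
        exact pow_le_pow_right₀ hβ.le hj
      linarith
    rw [Function.iterate_succ_apply', ih (by omega), betaT,
      Int.fract_eq_self.mpr ⟨by positivity, by rw [← mul_assoc, ← pow_succ']; exact hlt⟩]
    rw [← mul_assoc, ← pow_succ']

lemma small_digit (hβ : 1 < β) {y : ℝ} (hy0 : 0 ≤ y) {M : ℕ} (hyM : y < (β ^ M)⁻¹)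
    {j : ℕ} (hj : j < M) : betaDigit β y j = 0 := by
  have hb : (0:ℝ) < β := lt_trans one_pos hβ
  rw [betaDigit, small_iter hβ hy0 hyM j (by omega)]
  have hlt : β * (β ^ j * y) < 1 := by
    have h1 : β * (β ^ j * y) < β ^ (j+1) * (β ^ M)⁻¹ := by
      rw [← mul_assoc, ← pow_succ']
      exact mul_lt_mul_of_pos_left hyM (pow_pos hb _)
    have h2 : β ^ (j+1) * (β ^ M)⁻¹ ≤ 1 := by
      rw [mul_inv_le_iff₀ (pow_pos hb M), one_mul]
      exact pow_le_pow_right₀ hβ.le (by omega)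
    linarith
  rw [Int.floor_eq_zero_iff.mpr ⟨by positivity, hlt⟩]
  rfl

lemma cyl_full (hβ : 1 < β) {M : ℕ}
    (hkey : ∀ m : ℕ, ∀ x : ℝ, 0 ≤ x → x < 1 → pv β x m ≤ 1 - (β ^ (m + M))⁻¹)
    {n : ℕ} (w : Fin n → ℕ) {x₀ : ℝ} (hx₀ : x₀ ∈ Set.Ico (0:ℝ) 1)
    (hw : ∀ i : Fin n, betaDigit β x₀ i = w i) :
    cylinder β (Fin.append w (fun _ : Fin M => 0)) =
      Set.Ico (pv β x₀ n) (pv β x₀ n + (β ^ (n + M))⁻¹) := by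
  have hb : (0:ℝ) < β := lt_trans one_pos hβ
  obtain ⟨hx₀0, hx₀1⟩ := hx₀
  set c := pv β x₀ n with hc
  ext x
  constructor
  · rintro ⟨⟨hx0, hx1⟩, hx2⟩
    have hA : ∀ i, (hi : i < n) → betaDigit β x i = betaDigit β x₀ i := by
      intro i hi
      have h := hx2 (Fin.castAdd M ⟨i, hi⟩)
      rw [Fin.append_left] at h
      rw [← hw ⟨i, hi⟩] at h
      simpa using h
    have hB : ∀ j, (hj : j < M) → betaDigit β x (n + j) = 0 := by
      intro j hj
      have h := hx2 (Fin.natAdd n ⟨j, hj⟩)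
      rw [Fin.append_right] at h
      simpa using h
    have hpvn : pv β x n = c := by
      rw [hc]
      apply Finset.sum_congr rfl
      intro i hi
      rw [Finset.mem_range] at hi
      rw [hA i hi]
    have hpvtail : pv β ((betaT β)^[n] x) M = 0 := by
      apply Finset.sum_eq_zero
      intro j hj
      rw [Finset.mem_range] at hj
      rw [← digit_shift, hB j hj]
      simp
    have hpvnM : pv β x (n + M) = c := by
      rw [pv_shift hβ x n M, hpvtail, hpvn]
      ring
    constructor
    · rw [← hpvnM]
      exact pv_le hβ hx0 hx1.le (n + M)
    · rw [← hpvnM]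
      exact lt_pv_add hβ hx0 hx1 (n + M)
  · rintro ⟨hxl, hxu⟩
    have hx0 : 0 ≤ x := le_trans (pv_nonneg hβ x₀ n) hxl
    have hx1 : x < 1 := by
      have := hkey n x₀ hx₀0 hx₀1
      calc x < c + (β ^ (n + M))⁻¹ := hxu
      _ ≤ (1 - (β ^ (n + M))⁻¹) + (β ^ (n + M))⁻¹ := by rw [hc]; linarith
      _ = 1 := by ring
    -- first n digits of x agree with x₀
    have claim1 : ∀ i, i ≤ n → ∀ j, j < i → betaDigit β x j = betaDigit β x₀ j := by
      intro i
      induction i with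
      | zero => intro _ j hj; omega
      | succ i IH =>
        intro hi j hj
        rcases Nat.lt_or_ge j i with hji | hji
        · exact IH (by omega) j hji
        · have hji' : j = i := by omega
          subst hji'
          have hin : j < n := by omega
          have hpvj : pv β x j = pv β x₀ j := by
            apply Finset.sum_congr rfl
            intro l hl
            rw [Finset.mem_range] at hl
            rw [IH (by omega) l hl]
          set d := betaDigit β x₀ j with hd
          -- lower bound
          have hlow : (d : ℝ) ≤ β ^ (j+1) * (x - pv β x₀ j) := by
            have h1 : pv β x₀ (j+1) = pv β x₀ j + (d : ℝ) * (β ^ (j+1))⁻¹ := by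
              rw [pv, Finset.sum_range_succ, ← pv, hd]
            have h2 : pv β x₀ (j+1) ≤ c := pv_mono hβ x₀ (by omega)
            have h3 : c ≤ x := hxl
            have hp : (0:ℝ) < β ^ (j+1) := pow_pos hb _
            have h5 : (d:ℝ) * (β ^ (j+1))⁻¹ ≤ x - pv β x₀ j := by linarith
            calc (d:ℝ) = β ^ (j+1) * ((d:ℝ) * (β ^ (j+1))⁻¹) := by field_simp
            _ ≤ β ^ (j+1) * (x - pv β x₀ j) := mul_le_mul_of_nonneg_left h5 hp.le
          -- upper bound
          have hup : β ^ (j+1) * (x - pv β x₀ j) < (d : ℝ) + 1 := by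
            set y' := (betaT β)^[j+1] x₀ with hy'
            have hy'0 : 0 ≤ y' := by
              rw [hy', Function.iterate_succ_apply']
              exact Int.fract_nonneg _
            have hy'1 : y' < 1 := by
              rw [hy', Function.iterate_succ_apply']
              exact Int.fract_lt_one _
            have hdecomp : c = pv β x₀ (j+1) + (β ^ (j+1))⁻¹ * pv β y' (n - (j+1)) := by
              have h' := pv_shift hβ x₀ (j+1) (n - (j+1))
              rw [show (j+1) + (n - (j+1)) = n from by omega] at h'
              rw [hc]
              exact h'
            have hkey' : pv β y' (n - (j+1)) ≤ 1 - (β ^ ((n - (j+1)) + M))⁻¹ :=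
              hkey _ y' hy'0 hy'1
            have h1 : pv β x₀ (j+1) = pv β x₀ j + (d : ℝ) * (β ^ (j+1))⁻¹ := by
              rw [pv, Finset.sum_range_succ, ← pv, hd]
            have hsplit : ((β : ℝ) ^ (n + M))⁻¹ = (β ^ (j+1))⁻¹ * (β ^ ((n - (j+1)) + M))⁻¹ := by
              rw [← mul_inv, ← pow_add]
              congr 2
              omega
            have hp : (0:ℝ) < β ^ (j+1) := pow_pos hb _
            have hq : (0:ℝ) < β ^ ((n - (j+1)) + M) := pow_pos hb _
            have hx' : x < c + (β ^ (n + M))⁻¹ := hxu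
            rw [hdecomp, h1, hsplit] at hx'
            have hmul : (β ^ (j+1))⁻¹ * pv β y' (n - (j+1)) ≤
                (β ^ (j+1))⁻¹ * (1 - (β ^ ((n - (j+1)) + M))⁻¹) :=
              mul_le_mul_of_nonneg_left hkey' (by positivity)
            have h6 : x - pv β x₀ j < ((d:ℝ) + 1) * (β ^ (j+1))⁻¹ := by nlinarith
            calc β ^ (j+1) * (x - pv β x₀ j)
                < β ^ (j+1) * (((d:ℝ) + 1) * (β ^ (j+1))⁻¹) := mul_lt_mul_of_pos_left h6 hp
            _ = (d:ℝ) + 1 := by field_simp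
          -- conclude
          have hTj : (betaT β)^[j] x = β ^ j * (x - pv β x j) := iterT_eq hβ hx0 hx1.le j
          have hfloor : ⌊β * (betaT β)^[j] x⌋ = (d : ℤ) := by
            rw [Int.floor_eq_iff]
            constructor
            · rw [hTj, hpvj, ← mul_assoc, ← pow_succ']
              exact_mod_cast hlow
            · rw [hTj, hpvj, ← mul_assoc, ← pow_succ']
              exact_mod_cast hup
          rw [betaDigit, hfloor]
          simp [hd]
    have hagree : ∀ j, j < n → betaDigit β x j = betaDigit β x₀ j := claim1 n le_rfl
    have hpvn : pv β x n = c := by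
      rw [hc]
      apply Finset.sum_congr rfl
      intro i hi
      rw [Finset.mem_range] at hi
      rw [hagree i hi]
    have hTn : (betaT β)^[n] x = β ^ n * (x - c) := by
      rw [iterT_eq hβ hx0 hx1.le n, hpvn]
    have hTn0 : 0 ≤ (betaT β)^[n] x := by
      rw [hTn]
      have : c ≤ x := hxl
      nlinarith [pow_pos hb n]
    have hTnM : (betaT β)^[n] x < (β ^ M)⁻¹ := by
      rw [hTn]
      have h1 : x - c < (β ^ (n + M))⁻¹ := by linarith
      have hsplit : ((β : ℝ) ^ (n + M))⁻¹ = (β ^ n)⁻¹ * (β ^ M)⁻¹ := by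
        rw [← mul_inv, ← pow_add]
      have hp : (0:ℝ) < β ^ n := pow_pos hb _
      calc β ^ n * (x - c) < β ^ n * ((β ^ n)⁻¹ * (β ^ M)⁻¹) := by
            rw [← hsplit]; exact mul_lt_mul_of_pos_left h1 hp
      _ = (β ^ M)⁻¹ := by field_simp
    refine ⟨⟨hx0, hx1⟩, ?_⟩
    intro i
    rcases Nat.lt_or_ge (i : ℕ) n with hlt | hge
    · have heq : i = Fin.castAdd M ⟨(i : ℕ), hlt⟩ := by
        apply Fin.ext
        simp
      rw [heq, Fin.append_left, ← hw ⟨(i : ℕ), hlt⟩]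
      have := hagree (i : ℕ) hlt
      simpa using this
    · have hiM : (i : ℕ) - n < M := by omega
      have heq : i = Fin.natAdd n ⟨(i : ℕ) - n, hiM⟩ := by
        apply Fin.ext
        simp
        omega
      rw [heq, Fin.append_right]
      show betaDigit β x ((Fin.natAdd n ⟨(i : ℕ) - n, hiM⟩ : Fin (n + M)) : ℕ) = 0
      have hval : ((Fin.natAdd n ⟨(i : ℕ) - n, hiM⟩ : Fin (n + M)) : ℕ) = n + ((i : ℕ) - n) := rfl
      rw [hval, digit_shift]
      exact small_digit hβ hTn0 hTnM hiM

end Aux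

/-- If `β ∈ B₀`, i.e. the runs of zeros in the infinite β-expansion of 1 are
bounded (every window of some fixed length `C` after any position contains a
nonzero digit), then there is an `M > 0` such that appending `0^M` to any
admissible word gives a full cylinder; in particular
`β^{-(n+M)} ≤ |I_n(ε_1,…,ε_n)| ≤ β^{-n}` for every admissible word. -/
theorem stmt14 (β : ℝ) (hβ : 1 < β)
    (hB0 : ∃ C : ℕ, ∀ n : ℕ, ∃ j : ℕ, 1 ≤ j ∧ j ≤ C ∧ oneStar β (n + j) ≠ 0) :
    ∃ M : ℕ, 0 < M ∧ ∀ (n : ℕ) (w : Fin n → ℕ), w ∈ admissibleWords β n →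
      volume (cylinder β (Fin.append w (fun _ : Fin M => 0))) =
        ENNReal.ofReal ((β ^ (n + M))⁻¹) ∧
      ENNReal.ofReal ((β ^ (n + M))⁻¹) ≤ volume (cylinder β w) ∧
      volume (cylinder β w) ≤ ENNReal.ofReal ((β ^ n)⁻¹) := by
  obtain ⟨C, hB0'⟩ := hB0
  have hb : (0:ℝ) < β := lt_trans one_pos hβ
  refine ⟨C + 1, Nat.succ_pos C, ?_⟩
  intro n w hw
  obtain ⟨x₀, hx₀, hwx⟩ := hw
  have hkey : ∀ m : ℕ, ∀ x : ℝ, 0 ≤ x → x < 1 → pv β x m ≤ 1 - (β ^ (m + (C+1)))⁻¹ := by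
    intro m x h0 h1
    have h := key_bound hβ hB0' m x h0 h1
    rw [show m + (C + 1) = m + C + 1 from by omega]
    exact h
  have hfull := cyl_full hβ hkey w hx₀ hwx
  have hvol : volume (cylinder β (Fin.append w (fun _ : Fin (C+1) => 0))) =
      ENNReal.ofReal ((β ^ (n + (C+1)))⁻¹) := by
    rw [hfull, Real.volume_Ico]
    congr 1
    ring
  refine ⟨hvol, ?_, ?_⟩
  · have hsub : cylinder β (Fin.append w (fun _ : Fin (C+1) => 0)) ⊆ cylinder β w := by
      rintro x ⟨hx1, hx2⟩
      refine ⟨hx1, ?_⟩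
      intro i
      have h := hx2 (Fin.castAdd (C+1) i)
      rw [Fin.append_left] at h
      simpa using h
    calc ENNReal.ofReal ((β ^ (n + (C+1)))⁻¹)
        = volume (cylinder β (Fin.append w (fun _ : Fin (C+1) => 0))) := hvol.symm
    _ ≤ volume (cylinder β w) := measure_mono hsub
  · have hsub : cylinder β w ⊆ Set.Ico (pv β x₀ n) (pv β x₀ n + (β ^ n)⁻¹) := by
      rintro x ⟨⟨hx0, hx1⟩, hx2⟩
      have hpv : pv β x n = pv β x₀ n := by
        apply Finset.sum_congr rfl
        intro i hi
        rw [Finset.mem_range] at hi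
        have h1 := hx2 ⟨i, hi⟩
        have h2 := hwx ⟨i, hi⟩
        rw [show ((⟨i, hi⟩ : Fin n) : ℕ) = i from rfl] at h1 h2
        rw [h1, ← h2]
      exact ⟨hpv ▸ pv_le hβ hx0 hx1.le n, hpv ▸ lt_pv_add hβ hx0 hx1 n⟩
    calc volume (cylinder β w) ≤ volume (Set.Ico (pv β x₀ n) (pv β x₀ n + (β ^ n)⁻¹)) :=
          measure_mono hsub
    _ = ENNReal.ofReal ((β ^ n)⁻¹) := by
        rw [Real.volume_Ico]
        congr 1
        ring
end

section
/- Let β > 1 and α ∈ I_β = [0, Λ(β)]. Every x with Erdős–Rényi average A_φ(x,β) = α satisfies limsup_{n→∞} (1/n)Σ_{i=1}^n ε_i(x,β) ≤ α, provided φ(n) → ∞ as n → ∞ and 1 ≤ φ(n) ≤ n. That is, ER_φ^β(α) ⊆ Ē^β(α) = {x : limsup_n S_n(x,β)/n ≤ α}. -/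
open Filter MeasureTheory Set

/-- The Erdős–Rényi maximum partial sum `I_{n,φ(n)}(x,β)
= max_{0 ≤ i ≤ n-φ(n)} (S_{i+φ(n)}(x,β) - S_i(x,β))`. -/
noncomputable def ERmax (β x : ℝ) (φ : ℕ → ℕ) (n : ℕ) : ℝ :=
  ⨆ i ∈ Finset.range (n - φ n + 1), (Sdig β x (i + φ n) - Sdig β x i)

/-- The Erdős–Rényi average `A_{n,φ(n)}(x,β) = I_{n,φ(n)}(x,β)/φ(n)`. -/
noncomputable def ERavg (β x : ℝ) (φ : ℕ → ℕ) (n : ℕ) : ℝ := ERmax β x φ n / φ n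

lemma betaT_iter_mem (β x : ℝ) (hx : x ∈ Set.Ico (0:ℝ) 1) (n : ℕ) :
    (betaT β)^[n] x ∈ Set.Ico (0:ℝ) 1 := by
  cases n with
  | zero => simpa using hx
  | succ n =>
      rw [Function.iterate_succ_apply']
      exact ⟨Int.fract_nonneg _, Int.fract_lt_one _⟩

lemma betaDigit_le (β : ℝ) (hβ : 1 < β) (x : ℝ) (hx : x ∈ Set.Ico (0:ℝ) 1) (n : ℕ) :
    (betaDigit β x n : ℝ) ≤ β := by
  have h := betaT_iter_mem β x hx n
  have hβ0 : (0:ℝ) < β := lt_trans one_pos hβ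
  have h0 : (0:ℝ) ≤ β * (betaT β)^[n] x := mul_nonneg hβ0.le h.1
  have h1 : β * (betaT β)^[n] x < β := by
    calc β * (betaT β)^[n] x < β * 1 := mul_lt_mul_of_pos_left h.2 hβ0
      _ = β := mul_one β
  have h3 : (0:ℤ) ≤ ⌊β * (betaT β)^[n] x⌋ := Int.floor_nonneg.2 h0
  have h2 : ((⌊β * (betaT β)^[n] x⌋ : ℤ) : ℝ) ≤ β := le_trans (Int.floor_le _) h1.le
  unfold betaDigit
  rw [show ((⌊β * (betaT β)^[n] x⌋.toNat : ℕ) : ℝ) = ((⌊β * (betaT β)^[n] x⌋ : ℤ) : ℝ) by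
    exact_mod_cast congrArg (Int.cast : ℤ → ℝ) (Int.toNat_of_nonneg h3)]
  exact h2

lemma Sdig_nonneg (β x : ℝ) (n : ℕ) : 0 ≤ Sdig β x n :=
  Finset.sum_nonneg fun i _ => Nat.cast_nonneg _

lemma Sdig_le (β : ℝ) (hβ : 1 < β) (x : ℝ) (hx : x ∈ Set.Ico (0:ℝ) 1) (n : ℕ) :
    Sdig β x n ≤ β * n := by
  calc Sdig β x n ≤ ∑ _i ∈ Finset.range n, β :=
        Finset.sum_le_sum fun i _ => betaDigit_le β hβ x hx i
    _ = β * n := by rw [Finset.sum_const, Finset.card_range, nsmul_eq_mul, mul_comm]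

lemma window_le (β : ℝ) (hβ : 1 < β) (x : ℝ) (hx : x ∈ Set.Ico (0:ℝ) 1)
    (φ : ℕ → ℕ) (m : ℕ) (hm2 : φ m ≤ m) :
    Sdig β x m - Sdig β x (m - φ m) ≤ ERmax β x φ m := by
  set f : ℕ → ℝ := fun j => Sdig β x (j + φ m) - Sdig β x j with hf
  set g : ℕ → ℝ := fun j => ⨆ (_ : j ∈ Finset.range (m - φ m + 1)), f j with hg
  have hbdd : BddAbove (Set.range g) := by
    refine ⟨β * m, ?_⟩
    rintro _ ⟨j, rfl⟩
    refine Real.iSup_le (fun hj => ?_) (by positivity)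
    have hj' : j + φ m ≤ m := by
      have := Finset.mem_range.1 hj; omega
    have h1 : Sdig β x (j + φ m) ≤ β * m := by
      calc Sdig β x (j + φ m) ≤ β * ((j + φ m : ℕ) : ℝ) := Sdig_le β hβ x hx _
        _ ≤ β * m := by
            have : ((j + φ m : ℕ) : ℝ) ≤ (m : ℝ) := by exact_mod_cast hj'
            have hβ0 : (0:ℝ) < β := lt_trans one_pos hβ
            exact mul_le_mul_of_nonneg_left this hβ0.le
    have h2 : 0 ≤ Sdig β x j := Sdig_nonneg β x j
    simp only [hf]; linarith
  have hmem : m - φ m ∈ Finset.range (m - φ m + 1) := Finset.mem_range.2 (by omega)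
  have key : f (m - φ m) ≤ ERmax β x φ m := by
    have : g (m - φ m) ≤ ⨆ j, g j := le_ciSup hbdd (m - φ m)
    rw [hg] at this
    simpa [ciSup_pos hmem, ERmax, hf] using this
  have : (m - φ m) + φ m = m := by omega
  rw [hf] at key
  simpa [this] using key

/-- If `1 ≤ φ(n) ≤ n`, `φ(n) → ∞` and the Erdős–Rényi average of `x` equals `α`,
then `limsup_n S_n(x,β)/n ≤ α`; i.e. `ER_φ^β(α) ⊆ Ē^β(α)`. -/
theorem stmt16 (β : ℝ) (hβ : 1 < β) (α : ℝ)
    (hI : α ∈ Set.Icc 0 (sSup {a : ℝ | ∃ x ∈ Set.Ico (0:ℝ) 1,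
      a = limsup (fun n : ℕ => Sdig β x n / n) atTop}))
    (φ : ℕ → ℕ) (hφ : ∀ n : ℕ, 1 ≤ n → 1 ≤ φ n ∧ φ n ≤ n)
    (hφtop : Tendsto φ atTop atTop)
    (x : ℝ) (hx : x ∈ Set.Ico (0:ℝ) 1)
    (hA : Tendsto (fun n : ℕ => ERavg β x φ n) atTop (nhds α)) :
    limsup (fun n : ℕ => Sdig β x n / n) atTop ≤ α := by
  have hα0 : 0 ≤ α := hI.1
  have hβ0 : (0:ℝ) < β := lt_trans one_pos hβ
  have key : ∀ ε : ℝ, 0 < ε → limsup (fun n : ℕ => Sdig β x n / n) atTop ≤ α + ε := by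
    intro ε hε
    obtain ⟨N0, hN0⟩ := eventually_atTop.1 (hA.eventually_lt_const (by linarith : α < α + ε))
    set N := max N0 1 with hN
    -- main claim by strong induction
    have claim : ∀ m : ℕ, Sdig β x m ≤ (α + ε) * m + β * N := by
      intro m
      induction m using Nat.strong_induction_on with
      | _ m ih =>
        by_cases hm : m < N
        · have h1 : Sdig β x m ≤ β * m := Sdig_le β hβ x hx m
          have h2 : β * m ≤ β * N :=
            mul_le_mul_of_nonneg_left (by exact_mod_cast hm.le) hβ0.le
          have h3 : 0 ≤ (α + ε) * m :=
            mul_nonneg (by linarith) (Nat.cast_nonneg m)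
          linarith
        · push_neg at hm
          have hm1 : 1 ≤ m := le_trans (le_max_right N0 1) hm
          obtain ⟨hφ1, hφ2⟩ := hφ m hm1
          have hwin := window_le β hβ x hx φ m hφ2
          have hERavg : ERavg β x φ m < α + ε := hN0 m (le_trans (le_max_left N0 1) hm)
          have hφpos : (0:ℝ) < (φ m : ℝ) := by exact_mod_cast hφ1
          have hER : ERmax β x φ m ≤ (α + ε) * φ m := by
            rw [ERavg, div_lt_iff₀ hφpos] at hERavg
            linarith
          have hrec := ih (m - φ m) (by omega)
          have hcast : ((m - φ m : ℕ) : ℝ) = (m : ℝ) - (φ m : ℝ) := by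
            rw [Nat.cast_sub hφ2]
          rw [hcast] at hrec
          linarith
    -- pass to limsup
    have hub : ∀ᶠ n in atTop, Sdig β x n / n ≤ (α + ε) + β * N / n := by
      filter_upwards [eventually_ge_atTop 1] with n hn
      have hn0 : (0:ℝ) < n := by exact_mod_cast hn
      rw [div_le_iff₀ hn0]
      have hexp : ((α + ε) + β * N / n) * n = (α + ε) * n + β * N := by
        field_simp
      rw [hexp]
      exact claim n
    have hlim : Tendsto (fun n : ℕ => (α + ε) + β * N / n) atTop (nhds (α + ε)) := by
      have h0 : Tendsto (fun n : ℕ => β * N / (n : ℝ)) atTop (nhds 0) :=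
        Tendsto.div_atTop tendsto_const_nhds tendsto_natCast_atTop_atTop
      simpa using tendsto_const_nhds.add h0
    have hcb : IsCoboundedUnder (· ≤ ·) atTop (fun n : ℕ => Sdig β x n / n) := by
      refine isCoboundedUnder_le_of_le atTop (x := 0) fun n => ?_
      exact div_nonneg (Sdig_nonneg β x n) (Nat.cast_nonneg n)
    have hbd : IsBoundedUnder (· ≤ ·) atTop (fun n : ℕ => (α + ε) + β * N / n) :=
      hlim.isBoundedUnder_le
    calc limsup (fun n : ℕ => Sdig β x n / n) atTop
        ≤ limsup (fun n : ℕ => (α + ε) + β * N / n) atTop := limsup_le_limsup hub hcb hbd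
      _ = α + ε := hlim.limsup_eq
  by_contra hcon
  push_neg at hcon
  have := key ((limsup (fun n : ℕ => Sdig β x n / n) atTop - α) / 2) (by linarith)
  linarith
end
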